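/- Let ϑₙ = π(1 − 2⁻ⁿ), ζₙ = e^{iϑₙ}, uₙ(z) = Re((ζₙ + z)/(ζₙ − z)), γ = (γₙ) ∈ ℓ¹, and u = Σₙ γₙ uₙ. Then for every ζ = e^{iΘ} ∈ ∂𝔻 with Θ ∈ (0, 2π), Θ ≠ π, and Θ ≠ ϑₙ for all n ≥ 1, the function u has nontangential limit 0 at ζ; more precisely, for every c > 0 there are C < ∞ and r₀ ∈ (0,1) such that |u(r e^{iϑ})| ≤ C ‖γ‖₁ (1 − r) whenever r ∈ (r₀, 1) and |ϑ − Θ| < c(1 − r). -/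

import Mathlib

open Complex MeasureTheory Filter Set

noncomputable section

def HasNTLimit (u : ℂ → ℝ) (ζ : ℂ) (L : ℝ) : Prop :=
  ∀ c : ℝ, 0 < c →
    Filter.Tendsto u
      (nhdsWithin ζ {z : ℂ | ‖z‖ < 1 ∧ ‖z - ζ‖ ≤ c * (1 - ‖z‖)})
      (nhds L)

/-- `ϑₙ = π(1 - 2⁻⁽ⁿ⁺¹⁾)` (indexing from `n = 0`, so this is the paper's `ϑ_{n+1}`). -/
def theta (n : ℕ) : ℝ := Real.pi * (1 - (1 / 2 : ℝ) ^ (n + 1))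

def zeta (n : ℕ) : ℂ := Complex.exp (theta n * Complex.I)

def uP (n : ℕ) (z : ℂ) : ℝ := ((zeta n + z) / (zeta n - z)).re

/-!
Each `uₙ` is the Poisson kernel `(1 - |z|²) / |ζₙ - z|²`, so it is `O(1 - |z|)` uniformly in `n`
away from the poles `ζₙ`. Since `ζₙ → -1`, a boundary point `ζ = e^{iΘ}` different from `-1` and
from every `ζₙ` is at distance `≥ δ > 0` from all poles, and on the disk of radius `δ / 2` around
it `|u(z)| ≤ (8 / δ²) ‖γ‖₁ (1 - |z|)`. This gives the limit, and in a Stolz sector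
`|z - ζ| ≤ (1 + c)(1 - |z|)`, so the sector near `ζ` lies in that disk.
-/

open scoped Topology

lemma re_add_div_sub_eq {w : ℂ} (hw : ‖w‖ = 1) (z : ℂ) :
    ((w + z) / (w - z)).re = (1 - ‖z‖ ^ 2) / ‖w - z‖ ^ 2 := by
  have hw' : w.re * w.re + w.im * w.im = 1 := by
    rw [← normSq_apply, normSq_eq_norm_sq, hw, one_pow]
  rw [div_re, ← add_div, ← normSq_eq_norm_sq, ← normSq_eq_norm_sq, normSq_apply, normSq_apply]
  congr 1
  simp only [add_re, sub_re, add_im, sub_im]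
  linear_combination hw'

lemma abs_re_add_div_sub_le {w z : ℂ} (hw : ‖w‖ = 1) (hz : ‖z‖ ≤ 1) {e : ℝ} (he : 0 < e)
    (hwz : e ≤ ‖w - z‖) : |((w + z) / (w - z)).re| ≤ 2 * (1 - ‖z‖) / e ^ 2 := by
  have hz0 := norm_nonneg z
  have hnum : 0 ≤ 1 - ‖z‖ ^ 2 := by nlinarith
  rw [re_add_div_sub_eq hw, abs_of_nonneg (by positivity)]
  exact div_le_div₀ (by linarith) (by nlinarith) (by positivity) (by gcongr)

lemma abs_tsum_mul_le {ι : Type*} {γ f : ι → ℝ} (hγ : Summable fun i => |γ i|) {B : ℝ}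
    (hf : ∀ i, |f i| ≤ B) : |∑' i, γ i * f i| ≤ (∑' i, |γ i|) * B :=
  tsum_of_norm_bounded (hγ.hasSum.mul_right B) fun i => by
    rw [Real.norm_eq_abs, abs_mul]
    exact mul_le_mul_of_nonneg_left (hf i) (abs_nonneg _)

lemma Filter.Tendsto.exists_pos_le_dist {X : Type*} [MetricSpace X] {x : ℕ → X} {a p : X}
    (hx : Tendsto x atTop (𝓝 a)) (hpa : p ≠ a) (hpx : ∀ n, p ≠ x n) :
    ∃ δ > 0, ∀ n, δ ≤ dist p (x n) := by
  have hp : p ∈ (insert a (range x))ᶜ := by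
    rintro (rfl | ⟨n, rfl⟩)
    exacts [hpa rfl, hpx n rfl]
  obtain ⟨δ, hδ, hball⟩ :=
    Metric.isOpen_iff.mp hx.isCompact_insert_range.isClosed.isOpen_compl p hp
  refine ⟨δ, hδ, fun n => not_lt.mp fun hn => hball ?_ (mem_insert_of_mem a (mem_range_self n))⟩
  rwa [Metric.mem_ball, dist_comm]

lemma exp_mul_I_ne_exp_mul_I {a b : ℝ} (ha : a ∈ Ico 0 (2 * Real.pi))
    (hb : b ∈ Ico 0 (2 * Real.pi)) (hab : a ≠ b) : cexp (a * I) ≠ cexp (b * I) :=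
  fun h => hab (Circle.exp_injOn_Ico (by rw [sub_zero]) ha hb (Subtype.ext h))

lemma norm_exp_mul_I_sub_exp_mul_I_le (a b : ℝ) : ‖cexp (a * I) - cexp (b * I)‖ ≤ |a - b| := by
  have h : cexp (a * I) - cexp (b * I) = cexp (b * I) * (cexp (I * ↑(a - b)) - 1) := by
    rw [mul_sub, mul_one, ← Complex.exp_add]
    push_cast
    ring_nf
  rw [h, norm_mul, norm_exp_ofReal_mul_I, one_mul, ← Real.norm_eq_abs]
  exact Real.norm_exp_I_mul_ofReal_sub_one_le

lemma theta_mem_Ioo (n : ℕ) : theta n ∈ Ioo 0 Real.pi := by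
  have hpow : (1 / 2 : ℝ) ^ (n + 1) ∈ Ioo 0 1 :=
    ⟨by positivity, pow_lt_one₀ (by norm_num) (by norm_num) n.succ_ne_zero⟩
  constructor <;> unfold theta <;> nlinarith [Real.pi_pos, hpow.1, hpow.2]

lemma tendsto_theta : Tendsto theta atTop (𝓝 Real.pi) := by
  have h := ((tendsto_pow_atTop_nhds_zero_of_lt_one (by norm_num : (0 : ℝ) ≤ 1 / 2)
    (by norm_num)).comp (tendsto_add_atTop_nat 1)).const_sub 1 |>.const_mul Real.pi
  rwa [sub_zero, mul_one] at h

lemma tendsto_zeta : Tendsto zeta atTop (𝓝 (-1)) := by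
  rw [← exp_pi_mul_I]
  exact ((continuous_exp.comp (continuous_ofReal.mul continuous_const)).tendsto _).comp
    tendsto_theta

lemma exists_pos_le_norm_exp_sub_zeta {Θ : ℝ} (hΘ0 : 0 < Θ) (hΘ2 : Θ < 2 * Real.pi)
    (hΘπ : Θ ≠ Real.pi) (hΘn : ∀ n, Θ ≠ theta n) :
    ∃ δ > 0, ∀ n, δ ≤ ‖cexp (Θ * I) - zeta n‖ := by
  have hΘ : Θ ∈ Ico 0 (2 * Real.pi) := ⟨hΘ0.le, hΘ2⟩
  have hπ : Real.pi ∈ Ico 0 (2 * Real.pi) := ⟨Real.pi_pos.le, by linarith [Real.pi_pos]⟩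
  simp_rw [← dist_eq_norm]
  refine tendsto_zeta.exists_pos_le_dist ?_ fun n => ?_
  · rw [← exp_pi_mul_I]
    exact exp_mul_I_ne_exp_mul_I hΘ hπ hΘπ
  · obtain ⟨h0, hπn⟩ := theta_mem_Ioo n
    exact exp_mul_I_ne_exp_mul_I hΘ ⟨h0.le, by linarith⟩ (hΘn n)

lemma abs_tsum_mul_uP_le {γ : ℕ → ℝ} (hγ : Summable fun n => |γ n|) {ζ : ℂ} {δ : ℝ}
    (hδ : 0 < δ) (hζ : ∀ n, δ ≤ ‖ζ - zeta n‖) {z : ℂ} (hz : ‖z‖ ≤ 1) (hzζ : ‖z - ζ‖ ≤ δ / 2) :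
    |∑' n, γ n * uP n z| ≤ 8 / δ ^ 2 * (∑' n, |γ n|) * (1 - ‖z‖) := by
  have hpole : ∀ n, δ / 2 ≤ ‖zeta n - z‖ := fun n => by
    have := norm_sub_le_norm_sub_add_norm_sub ζ z (zeta n)
    rw [norm_sub_rev ζ z, norm_sub_rev z (zeta n)] at this
    linarith [hζ n]
  have hnorm : ∀ n, ‖zeta n‖ = 1 := fun n => norm_exp_ofReal_mul_I _
  calc |∑' n, γ n * uP n z|
      ≤ (∑' n, |γ n|) * (2 * (1 - ‖z‖) / (δ / 2) ^ 2) :=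
        abs_tsum_mul_le hγ fun n => abs_re_add_div_sub_le (hnorm n) hz (half_pos hδ) (hpole n)
    _ = 8 / δ ^ 2 * (∑' n, |γ n|) * (1 - ‖z‖) := by field_simp; ring

lemma hasNTLimit_zero_of_abs_le {u : ℂ → ℝ} {ζ : ℂ} (hζ : ‖ζ‖ = 1) {K : ℝ}
    (h : ∀ᶠ z in 𝓝 ζ, ‖z‖ ≤ 1 → |u z| ≤ K * (1 - ‖z‖)) : HasNTLimit u ζ 0 := by
  intro c _
  refine squeeze_zero_norm' (a := fun z => K * (1 - ‖z‖)) ?_ ?_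
  · filter_upwards [nhdsWithin_le_nhds h, self_mem_nhdsWithin] with z hz hmem
    exact hz hmem.1.le
  · exact ((continuous_const.mul (continuous_const.sub continuous_norm)).tendsto' ζ 0
      (by simp [hζ])).mono_left nhdsWithin_le_nhds

lemma norm_ofReal_mul_exp_sub_exp_le {r : ℝ} (hr1 : r ≤ 1) (ϑ Θ : ℝ) :
    ‖(r : ℂ) * cexp (ϑ * I) - cexp (Θ * I)‖ ≤ (1 - r) + |ϑ - Θ| := by
  have hradial : ‖(r : ℂ) * cexp (ϑ * I) - cexp (ϑ * I)‖ = 1 - r := by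
    rw [← sub_one_mul, norm_mul, norm_exp_ofReal_mul_I, mul_one, ← ofReal_one, ← ofReal_sub,
      norm_real, Real.norm_eq_abs, abs_of_nonpos (by linarith), neg_sub]
  calc _ ≤ ‖(r : ℂ) * cexp (ϑ * I) - cexp (ϑ * I)‖ + ‖cexp (ϑ * I) - cexp (Θ * I)‖ :=
        norm_sub_le_norm_sub_add_norm_sub _ _ _
    _ ≤ (1 - r) + |ϑ - Θ| := by
        rw [hradial]
        gcongr
        exact norm_exp_mul_I_sub_exp_mul_I_le ϑ Θ

/-- For `γ ∈ ℓ¹` and `u = Σ γₙ uₙ`: at every boundary point `ζ = e^{iΘ}` with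
`Θ ∈ (0, 2π)`, `Θ ≠ π`, `Θ ≠ ϑₙ` for all `n`, the function `u` has nontangential
limit `0`; more precisely, for every `c > 0` there are `C < ∞` and `r₀ ∈ (0,1)` with
`|u(r e^{iϑ})| ≤ C ‖γ‖₁ (1 - r)` whenever `r ∈ (r₀, 1)` and `|ϑ - Θ| < c (1 - r)`. -/
theorem sum_has_nontangential_limit_zero (γ : ℕ → ℝ)
    (hγ : Summable fun n : ℕ => |γ n|)
    (u : ℂ → ℝ) (hu : u = fun z : ℂ => ∑' n : ℕ, γ n * uP n z)
    (Θ : ℝ) (hΘ0 : 0 < Θ) (hΘ2 : Θ < 2 * Real.pi) (hΘπ : Θ ≠ Real.pi)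
    (hΘn : ∀ n : ℕ, Θ ≠ theta n) :
    HasNTLimit u (Complex.exp (Θ * Complex.I)) 0 ∧
    ∀ c : ℝ, 0 < c → ∃ C : ℝ, ∃ r₀ : ℝ, r₀ ∈ Set.Ioo (0 : ℝ) 1 ∧
      ∀ r : ℝ, r ∈ Set.Ioo r₀ 1 → ∀ ϑ : ℝ, |ϑ - Θ| < c * (1 - r) →
        |u ((r : ℂ) * Complex.exp (ϑ * Complex.I))|
          ≤ C * (∑' n : ℕ, |γ n|) * (1 - r) := by
  obtain ⟨δ, hδ, hζ⟩ := exists_pos_le_norm_exp_sub_zeta hΘ0 hΘ2 hΘπ hΘn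
  have hbound : ∀ z : ℂ, ‖z‖ ≤ 1 → ‖z - cexp (Θ * I)‖ ≤ δ / 2 →
      |u z| ≤ 8 / δ ^ 2 * (∑' n, |γ n|) * (1 - ‖z‖) := fun z hz hzζ => by
    rw [hu]
    exact abs_tsum_mul_uP_le hγ hδ hζ hz hzζ
  refine ⟨hasNTLimit_zero_of_abs_le (K := 8 / δ ^ 2 * ∑' n, |γ n|) (norm_exp_ofReal_mul_I Θ) ?_,
    fun c hc => ?_⟩
  · filter_upwards [Metric.closedBall_mem_nhds _ (half_pos hδ)] with z hzζ hz
    exact hbound z hz (mem_closedBall_iff_norm.mp hzζ)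
  have hρ : 0 < δ / 2 / (1 + c) := by positivity
  refine ⟨8 / δ ^ 2, max (1 / 2) (1 - δ / 2 / (1 + c)),
    ⟨by positivity, max_lt (by norm_num) (by linarith)⟩, fun r ⟨hr₀, hr1⟩ ϑ hϑ => ?_⟩
  have hr0 : 0 < r := lt_of_lt_of_le (by norm_num) ((le_max_left _ _).trans hr₀.le)
  have hnorm : ‖(r : ℂ) * cexp (ϑ * I)‖ = r := by
    rw [norm_mul, norm_exp_ofReal_mul_I, mul_one, norm_real, Real.norm_eq_abs, abs_of_pos hr0]
  have hsector : (1 - r) * (1 + c) < δ / 2 :=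
    (lt_div_iff₀ (by positivity)).mp (by linarith [le_max_right (1 / 2) (1 - δ / 2 / (1 + c))])
  have h := hbound _ (hnorm.trans_le hr1.le)
    (by linarith [norm_ofReal_mul_exp_sub_exp_le hr1.le ϑ Θ])
  rwa [hnorm] at h

end
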